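/- There exists M₀ > 0 with the following property. Let V₁, V₂ ⊂ ℝ² be the vertex sets of two regular pentagons of side length 1 with ‖p−q‖ ≥ M₀ for all p ∈ V₁, q ∈ V₂, and let D = V₁ ∪ V₂. Then: (a) there is a function x assigning a nonnegative weight to each nonempty subset C ⊆ D such that Σ_{C ∋ j} x_C ≥ 1 for every j ∈ D, Σ_C x_C ≤ 5, and Σ_C x_C·w_C = 5/2 (namely x_C = 1/2 for each of the 10 pairs of adjacent vertices within a pentagon and x_C = 0 otherwise); and (b) every partition of D into at most 5 nonempty clusters has total cost Σ_C w_C ≥ (16+√5)/6. Consequently the ratio between the optimal integral value and this fractional value is at least (16+√5)/15 > 1.2157. -/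

import Mathlib

noncomputable instance : DecidableEq (EuclideanSpace ℝ (Fin 2)) :=
  Classical.decEq _

/-- The vertices of the standard regular pentagon with side length 1 in the plane. -/
noncomputable def pentagonVertex (m : Fin 5) : EuclideanSpace ℝ (Fin 2) :=
  (1 / (2 * Real.sin (Real.pi / 5))) •
    (WithLp.equiv 2 (Fin 2 → ℝ)).symm
      ![Real.cos (2 * Real.pi * (m : ℕ) / 5), Real.sin (2 * Real.pi * (m : ℕ) / 5)]

/-- `V` is the vertex set of a regular pentagon with side length 1, i.e. a congruent copy
of the standard one. -/
def IsUnitRegularPentagon (V : Finset (EuclideanSpace ℝ (Fin 2))) : Prop :=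
  ∃ φ : EuclideanSpace ℝ (Fin 2) ≃ᵢ EuclideanSpace ℝ (Fin 2),
    V = Finset.image (fun m => φ (pentagonVertex m)) Finset.univ

/-- The cost of a cluster `C`: `(1/(2|C|))·Σ_{p∈C} Σ_{q∈C} ‖p−q‖²`, which equals the sum
of squared distances from the points of `C` to their centroid. -/
noncomputable def clusterCost (C : Finset (EuclideanSpace ℝ (Fin 2))) : ℝ :=
  (1 / (2 * (C.card : ℝ))) * ∑ p ∈ C, ∑ q ∈ C, ‖p - q‖ ^ 2

/-- `P` is a partition of `V` into at most `k` nonempty clusters. -/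
def IsPartitionIntoAtMost (V : Finset (EuclideanSpace ℝ (Fin 2))) (k : ℕ)
    (P : Finset (Finset (EuclideanSpace ℝ (Fin 2)))) : Prop :=
  (∀ C ∈ P, C.Nonempty) ∧ (P : Set (Finset (EuclideanSpace ℝ (Fin 2)))).PairwiseDisjoint id ∧
    P.sup id = V ∧ P.card ≤ k

namespace PentAux
open Real Finset

lemma h5 : Real.sqrt 5 ^ 2 = 5 := Real.sq_sqrt (by norm_num)
lemma hs2 : 2 < Real.sqrt 5 := by nlinarith [h5, Real.sqrt_nonneg 5]
lemma hs3 : Real.sqrt 5 < 3 := by nlinarith [h5, Real.sqrt_nonneg 5]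

def res (m n : Fin 5) : ℕ := (m.val + 5 - n.val) % 5

noncomputable def cc (k : ℕ) : ℝ :=
  if k % 5 = 0 then 1
  else if k % 5 = 1 ∨ k % 5 = 4 then (Real.sqrt 5 - 1) / 4
  else -(1 + Real.sqrt 5) / 4

lemma cos_two_pi_div_five : Real.cos (2 * Real.pi / 5) = (Real.sqrt 5 - 1) / 4 := by
  have h := Real.cos_two_mul (Real.pi / 5)
  rw [show 2 * (Real.pi / 5) = 2 * Real.pi / 5 by ring, Real.cos_pi_div_five] at h
  rw [h]; linear_combination h5 / 8

lemma cos_four_pi_div_five : Real.cos (4 * Real.pi / 5) = -(1 + Real.sqrt 5) / 4 := by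
  have h := Real.cos_two_mul (2 * Real.pi / 5)
  rw [show 2 * (2 * Real.pi / 5) = 4 * Real.pi / 5 by ring, cos_two_pi_div_five] at h
  rw [h]; linear_combination h5 / 8

lemma cos5 (k : ℕ) : Real.cos (2 * Real.pi * k / 5) = cc k := by
  obtain ⟨q, r, hr, rfl⟩ : ∃ q r, r < 5 ∧ k = 5 * q + r :=
    ⟨k / 5, k % 5, Nat.mod_lt _ (by norm_num), (Nat.div_add_mod k 5).symm⟩
  have hmod : (5 * q + r) % 5 = r := by omega
  have key : (2 * Real.pi * ((5 * q + r : ℕ) : ℝ) / 5) = 2 * Real.pi * r / 5 + (q : ℤ) * (2 * Real.pi) := by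
    push_cast; ring
  rw [key, Real.cos_add_int_mul_two_pi, cc, hmod]
  interval_cases r
  · norm_num
  · rw [show 2 * Real.pi * (1:ℕ) / 5 = 2 * Real.pi / 5 by push_cast; ring, cos_two_pi_div_five]; norm_num
  · rw [show 2 * Real.pi * (2:ℕ) / 5 = 4 * Real.pi / 5 by push_cast; ring, cos_four_pi_div_five]; norm_num
  · rw [show 2 * Real.pi * (3:ℕ) / 5 = Real.pi + Real.pi / 5 by push_cast; ring, Real.cos_add,
      Real.cos_pi, Real.sin_pi, Real.cos_pi_div_five]
    norm_num
    ring
  · rw [show 2 * Real.pi * (4:ℕ) / 5 = -(2 * Real.pi / 5) + (1 : ℤ) * (2 * Real.pi) by push_cast; ring,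
      Real.cos_add_int_mul_two_pi, Real.cos_neg, cos_two_pi_div_five]
    norm_num

lemma cos_diff (m n : Fin 5) :
    Real.cos (2 * Real.pi * (m : ℕ) / 5 - 2 * Real.pi * (n : ℕ) / 5) = cc (res m n) := by
  have hle : (n : ℕ) ≤ (m : ℕ) + 5 := by omega
  have key : 2 * Real.pi * (m : ℕ) / 5 - 2 * Real.pi * (n : ℕ) / 5
      = 2 * Real.pi * (((m : ℕ) + 5 - (n : ℕ) : ℕ) : ℝ) / 5 + (-1 : ℤ) * (2 * Real.pi) := by
    rw [Nat.cast_sub hle]; push_cast; ring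
  rw [key, Real.cos_add_int_mul_two_pi, cos5]
  unfold cc res
  rw [Nat.mod_mod_of_dvd _ dvd_rfl]


lemma sin_pi_div_five_sq : Real.sin (Real.pi / 5) ^ 2 = (5 - Real.sqrt 5) / 8 := by
  have h := Real.sin_sq_add_cos_sq (Real.pi / 5)
  rw [Real.cos_pi_div_five] at h
  linear_combination h - h5 / 16

lemma sin_pi_div_five_pos : 0 < Real.sin (Real.pi / 5) :=
  Real.sin_pos_of_pos_of_lt_pi (by positivity) (by linarith [Real.pi_pos])

lemma r2_eq : (1 / (2 * Real.sin (Real.pi / 5))) ^ 2 = (5 + Real.sqrt 5) / 10 := by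
  have hs := sin_pi_div_five_sq
  have hpos := sin_pi_div_five_pos
  have hne : Real.sin (Real.pi / 5) ≠ 0 := ne_of_gt hpos
  field_simp
  nlinarith [h5, hs]

noncomputable def sqd (m n : Fin 5) : ℝ :=
  if res m n = 0 then 0 else if res m n = 1 ∨ res m n = 4 then 1 else (3 + Real.sqrt 5) / 2

lemma norm_pv_sq (m n : Fin 5) :
    ‖pentagonVertex m - pentagonVertex n‖ ^ 2 = sqd m n := by
  set r : ℝ := 1 / (2 * Real.sin (Real.pi / 5)) with hr
  set a : ℝ := 2 * Real.pi * (m : ℕ) / 5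
  set b : ℝ := 2 * Real.pi * (n : ℕ) / 5
  have happ : ∀ i : Fin 2, (pentagonVertex m - pentagonVertex n) i
      = r * (![Real.cos a, Real.sin a] i) - r * (![Real.cos b, Real.sin b] i) := by
    intro i
    simp only [pentagonVertex, PiLp.sub_apply, PiLp.smul_apply, WithLp.equiv_symm_apply, PiLp.toLp_apply,
      smul_eq_mul]
    rfl
  have hnorm : ‖pentagonVertex m - pentagonVertex n‖ ^ 2
      = (r * Real.cos a - r * Real.cos b) ^ 2 + (r * Real.sin a - r * Real.sin b) ^ 2 := by
    rw [EuclideanSpace.norm_eq, Real.sq_sqrt (by positivity)]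
    rw [Fin.sum_univ_two, happ 0, happ 1]
    simp [sq_abs]
  rw [hnorm]
  have key : (r * Real.cos a - r * Real.cos b) ^ 2 + (r * Real.sin a - r * Real.sin b) ^ 2
      = (5 + Real.sqrt 5) / 10 * (2 - 2 * Real.cos (a - b)) := by
    rw [Real.cos_sub]
    linear_combination (r:ℝ)^2 * Real.sin_sq_add_cos_sq a + r^2 * Real.sin_sq_add_cos_sq b
      + (2 - 2*(Real.cos a * Real.cos b + Real.sin a * Real.sin b)) * r2_eq
  rw [key, cos_diff m n]
  have hres : res m n < 5 := Nat.mod_lt _ (by norm_num)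
  unfold sqd cc
  have : res m n % 5 = res m n := Nat.mod_eq_of_lt hres
  rw [this]
  interval_cases h : res m n <;> norm_num <;>
    nlinarith [h5]

lemma sqd_nonneg (m n : Fin 5) : 0 ≤ sqd m n := by
  rw [← norm_pv_sq]; positivity

lemma sqd_one_le (m n : Fin 5) (h : m ≠ n) : 1 ≤ sqd m n := by
  have hres : res m n ≠ 0 := by
    unfold res; intro hc
    apply h; ext
    omega
  unfold sqd
  rw [if_neg hres]
  split
  · exact le_refl _
  · nlinarith [hs2]

lemma res_adj : ∀ m : Fin 5, res m (m + 1) = 4 := by decide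


noncomputable def g (n : ℕ) : ℝ :=
  if n ≤ 1 then 0 else if n = 2 then 1/2 else if n = 3 then (7 + Real.sqrt 5)/6
  else if n = 4 then (15 + 3*Real.sqrt 5)/8 else (5 + Real.sqrt 5)/2

def adjP (p : Fin 5 × Fin 5) : Prop := res p.1 p.2 = 1 ∨ res p.1 p.2 = 4
def diagP (p : Fin 5 × Fin 5) : Prop := res p.1 p.2 = 2 ∨ res p.1 p.2 = 3

instance : DecidablePred adjP := fun p => by unfold adjP; infer_instance
instance : DecidablePred diagP := fun p => by unfold diagP; infer_instance

lemma count_eq : ∀ S : Finset (Fin 5),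
    ((S ×ˢ S).filter adjP).card + ((S ×ˢ S).filter diagP).card
      = S.card * (S.card - 1) := by decide

lemma count_adj_le : ∀ S : Finset (Fin 5),
    ((S ×ˢ S).filter adjP).card ≤ if S.card = 5 then 10 else 2 * (S.card - 1) := by decide

lemma sqd_split (i j : Fin 5) : sqd i j =
    (if adjP (i, j) then (1:ℝ) else 0) + (if diagP (i, j) then (3 + Real.sqrt 5)/2 else 0) := by
  have hres : res i j < 5 := Nat.mod_lt _ (by norm_num)
  unfold sqd adjP diagP
  dsimp only
  have h : res i j = 0 ∨ res i j = 1 ∨ res i j = 2 ∨ res i j = 3 ∨ res i j = 4 := by omega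
  rcases h with h | h | h | h | h <;> simp [h]

lemma sum_sqd (S : Finset (Fin 5)) :
    ∑ i ∈ S, ∑ j ∈ S, sqd i j
      = (((S ×ˢ S).filter adjP).card : ℝ)
        + (((S ×ˢ S).filter diagP).card : ℝ) * ((3 + Real.sqrt 5)/2) := by
  rw [← Finset.sum_product']
  calc ∑ p ∈ S ×ˢ S, sqd p.1 p.2
      = ∑ p ∈ S ×ˢ S, ((if adjP p then (1:ℝ) else 0) + (if diagP p then (3 + Real.sqrt 5)/2 else 0)) :=
        Finset.sum_congr rfl (fun p _ => sqd_split p.1 p.2)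
    _ = (∑ p ∈ S ×ˢ S, if adjP p then (1:ℝ) else 0)
        + (∑ p ∈ S ×ˢ S, if diagP p then (3 + Real.sqrt 5)/2 else 0) := Finset.sum_add_distrib
    _ = _ := by
        rw [← Finset.sum_filter, ← Finset.sum_filter, Finset.sum_const, Finset.sum_const]
        simp [nsmul_eq_mul]


lemma clusterCost_nonneg (C : Finset (EuclideanSpace ℝ (Fin 2))) : 0 ≤ clusterCost C := by
  unfold clusterCost
  have h1 : (0:ℝ) ≤ 1 / (2 * (C.card : ℝ)) := by positivity
  have h2 : (0:ℝ) ≤ ∑ p ∈ C, ∑ q ∈ C, ‖p - q‖ ^ 2 := by positivity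
  exact mul_nonneg h1 h2

variable (φ : EuclideanSpace ℝ (Fin 2) ≃ᵢ EuclideanSpace ℝ (Fin 2))

lemma w_norm (m n : Fin 5) : ‖φ (pentagonVertex m) - φ (pentagonVertex n)‖ ^ 2 = sqd m n := by
  rw [← dist_eq_norm, φ.dist_eq, dist_eq_norm, norm_pv_sq]

lemma w_inj : Function.Injective (fun m => φ (pentagonVertex m)) := by
  intro m n h
  by_contra hne
  have h1 := sqd_one_le m n hne
  rw [← w_norm φ] at h1
  have h' : φ (pentagonVertex m) = φ (pentagonVertex n) := h
  rw [h', sub_self] at h1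
  simp at h1
  linarith

lemma cost_ge_g (C : Finset (EuclideanSpace ℝ (Fin 2)))
    (hC : C ⊆ Finset.image (fun m => φ (pentagonVertex m)) Finset.univ) :
    g C.card ≤ clusterCost C := by
  classical
  have winj : Function.Injective (fun m => φ (pentagonVertex m)) := w_inj φ
  set S : Finset (Fin 5) := Finset.univ.filter (fun m => φ (pentagonVertex m) ∈ C) with hS
  have himg : S.image (fun m => φ (pentagonVertex m)) = C := by
    ext p
    simp only [Finset.mem_image, hS, Finset.mem_filter, Finset.mem_univ, true_and]
    constructor
    · rintro ⟨m, hm, rfl⟩; exact hm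
    · intro hp
      obtain ⟨m, -, rfl⟩ := Finset.mem_image.1 (hC hp)
      exact ⟨m, hp, rfl⟩
  have hcard : C.card = S.card := by
    rw [← himg, Finset.card_image_of_injective _ winj]
  have hsum : ∑ p ∈ C, ∑ q ∈ C, ‖p - q‖ ^ 2 = ∑ i ∈ S, ∑ j ∈ S, sqd i j := by
    rw [← himg, Finset.sum_image (fun a _ b _ h => winj h)]
    refine Finset.sum_congr rfl fun i _ => ?_
    rw [Finset.sum_image (fun a _ b _ h => winj h)]
    exact Finset.sum_congr rfl fun j _ => w_norm φ i j
  unfold clusterCost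
  rw [hsum, sum_sqd, hcard]
  have h1 := count_eq S
  have h2 := count_adj_le S
  set e := ((S ×ˢ S).filter adjP).card with he
  set d := ((S ×ˢ S).filter diagP).card with hd
  have hcardle : S.card ≤ 5 := by
    calc S.card ≤ (Finset.univ : Finset (Fin 5)).card :=
          Finset.card_le_card (Finset.filter_subset _ _)
      _ = 5 := by simp
  have hm : (0:ℝ) ≤ 1 + Real.sqrt 5 := by nlinarith [hs2]
  have hd' : (0:ℝ) ≤ (d:ℝ) := Nat.cast_nonneg d
  have hcases : S.card = 0 ∨ S.card = 1 ∨ S.card = 2 ∨ S.card = 3 ∨ S.card = 4 ∨ S.card = 5 := by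
    omega
  rcases hcases with hn | hn | hn | hn | hn | hn
  · rw [hn] at h1 ⊢
    have he0 : e = 0 := by omega
    have hd0 : d = 0 := by omega
    rw [he0, hd0]; norm_num [g]
  · rw [hn] at h1 ⊢
    have he0 : e = 0 := by omega
    have hd0 : d = 0 := by omega
    rw [he0, hd0]; norm_num [g]
  · rw [hn] at h1 h2 ⊢
    norm_num at h2
    have h1' : (e:ℝ) + d = 2 := by exact_mod_cast h1
    have h2' : (e:ℝ) ≤ 2 := by exact_mod_cast h2
    norm_num [g]
    nlinarith [mul_nonneg (by linarith : (0:ℝ) ≤ 2 - e) hm]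
  · rw [hn] at h1 h2 ⊢
    norm_num at h2
    have h1' : (e:ℝ) + d = 6 := by exact_mod_cast h1
    have h2' : (e:ℝ) ≤ 4 := by exact_mod_cast h2
    norm_num [g]
    nlinarith [mul_nonneg (by linarith : (0:ℝ) ≤ 4 - e) hm]
  · rw [hn] at h1 h2 ⊢
    norm_num at h2
    have h1' : (e:ℝ) + d = 12 := by exact_mod_cast h1
    have h2' : (e:ℝ) ≤ 6 := by exact_mod_cast h2
    norm_num [g]
    nlinarith [mul_nonneg (by linarith : (0:ℝ) ≤ 6 - e) hm]
  · rw [hn] at h1 h2 ⊢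
    norm_num at h2
    have h1' : (e:ℝ) + d = 20 := by exact_mod_cast h1
    have h2' : (e:ℝ) ≤ 10 := by exact_mod_cast h2
    norm_num [g]
    nlinarith [mul_nonneg (by linarith : (0:ℝ) ≤ 10 - e) hm]


lemma g_one_le (n : ℕ) (h : 1 ≤ n) : 0 ≤ g n := by
  have h4 : n ≤ 4 ∨ 5 ≤ n := by omega
  unfold g
  split_ifs <;> positivity

lemma g_pair (n1 n2 : ℕ) (h1 : 1 ≤ n1) (h2 : 1 ≤ n2) (h : n1 + n2 = 5) :
    (10 + Real.sqrt 5) / 6 ≤ g n1 + g n2 := by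
  have hb1 : n1 ≤ 4 := by omega
  have hb2 : n2 ≤ 4 := by omega
  interval_cases n1 <;> interval_cases n2 <;>
    first
      | omega
      | (norm_num [g] <;> nlinarith [hs2])

lemma g_triple (n1 n2 n3 : ℕ) (h1 : 1 ≤ n1) (h2 : 1 ≤ n2) (h3 : 1 ≤ n3)
    (h : n1 + n2 + n3 = 5) : 1 ≤ g n1 + g n2 + g n3 := by
  have hb1 : n1 ≤ 3 := by omega
  have hb2 : n2 ≤ 3 := by omega
  have hb3 : n3 ≤ 3 := by omega
  interval_cases n1 <;> interval_cases n2 <;> interval_cases n3 <;>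
    first
      | omega
      | (norm_num [g] <;> nlinarith [hs2])

noncomputable def pb (m : ℕ) : ℝ :=
  if m = 1 then (5 + Real.sqrt 5) / 2
  else if m = 2 then (10 + Real.sqrt 5) / 6
  else if m = 3 then 1 else 0

lemma pb_nonneg (m : ℕ) : 0 ≤ pb m := by
  unfold pb; split_ifs <;> positivity

lemma pent_partition_bound (P' : Finset (Finset (EuclideanSpace ℝ (Fin 2))))
    (hne : ∀ C ∈ P', C.Nonempty)
    (hdisj : (P' : Set (Finset (EuclideanSpace ℝ (Fin 2)))).PairwiseDisjoint id)
    (hsup : P'.sup id = Finset.image (fun m => φ (pentagonVertex m)) Finset.univ) :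
    pb P'.card ≤ ∑ C ∈ P', clusterCost C := by
  classical
  have hV5 : (Finset.image (fun m => φ (pentagonVertex m)) (Finset.univ : Finset (Fin 5))).card
      = 5 := by
    rw [Finset.card_image_of_injective _ (w_inj φ)]; simp
  have hsizes : ∑ C ∈ P', C.card = 5 := by
    have hb : (P'.biUnion id).card = ∑ C ∈ P', (id C).card :=
      Finset.card_biUnion (fun C hC D hD hne' =>
        hdisj (Finset.mem_coe.mpr hC) (Finset.mem_coe.mpr hD) hne')
    rw [← Finset.sup_eq_biUnion, hsup, hV5] at hb
    exact hb.symm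
  have hsub : ∀ C ∈ P', C ⊆ Finset.image (fun m => φ (pentagonVertex m)) Finset.univ := by
    intro C hC
    rw [← hsup]
    exact Finset.le_sup (f := id) hC
  have hpos : ∀ C ∈ P', 1 ≤ C.card := fun C hC => Finset.card_pos.mpr (hne C hC)
  by_cases hm1 : P'.card = 1
  · obtain ⟨C, rfl⟩ := Finset.card_eq_one.1 hm1
    have hCV : C = Finset.image (fun m => φ (pentagonVertex m)) Finset.univ := by
      simpa using hsup
    have hc5 : C.card = 5 := by rw [hCV, hV5]
    have hcost := cost_ge_g φ C (by rw [hCV])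
    rw [hc5] at hcost
    rw [Finset.sum_singleton]
    have : pb ({C} : Finset (Finset (EuclideanSpace ℝ (Fin 2)))).card = (5 + Real.sqrt 5) / 2 := by
      simp [pb]
    rw [this]
    have : g 5 = (5 + Real.sqrt 5) / 2 := by norm_num [g]
    linarith [hcost, this]
  by_cases hm2 : P'.card = 2
  · obtain ⟨C₁, C₂, h12, rfl⟩ := Finset.card_eq_two.1 hm2
    have hmem1 : C₁ ∈ ({C₁, C₂} : Finset (Finset (EuclideanSpace ℝ (Fin 2)))) := by simp
    have hmem2 : C₂ ∈ ({C₁, C₂} : Finset (Finset (EuclideanSpace ℝ (Fin 2)))) := by simp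
    rw [Finset.sum_pair h12]
    rw [Finset.sum_pair h12] at hsizes
    have hg := g_pair C₁.card C₂.card (hpos _ hmem1) (hpos _ hmem2) hsizes
    have hc1 := cost_ge_g φ C₁ (hsub _ hmem1)
    have hc2 := cost_ge_g φ C₂ (hsub _ hmem2)
    have hpb : pb ({C₁, C₂} : Finset (Finset (EuclideanSpace ℝ (Fin 2)))).card
        = (10 + Real.sqrt 5) / 6 := by
      rw [hm2]; simp [pb]
    rw [hpb]
    linarith
  by_cases hm3 : P'.card = 3
  · obtain ⟨C₁, C₂, C₃, h12, h13, h23, rfl⟩ := Finset.card_eq_three.1 hm3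
    have hmem1 : C₁ ∈ ({C₁, C₂, C₃} : Finset (Finset (EuclideanSpace ℝ (Fin 2)))) := by simp
    have hmem2 : C₂ ∈ ({C₁, C₂, C₃} : Finset (Finset (EuclideanSpace ℝ (Fin 2)))) := by simp
    have hmem3 : C₃ ∈ ({C₁, C₂, C₃} : Finset (Finset (EuclideanSpace ℝ (Fin 2)))) := by simp
    have hsum3 : ∀ f : Finset (EuclideanSpace ℝ (Fin 2)) → ℝ,
        ∑ C ∈ ({C₁, C₂, C₃} : Finset (Finset (EuclideanSpace ℝ (Fin 2)))), f C
          = f C₁ + f C₂ + f C₃ := by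
      intro f
      rw [Finset.sum_insert (by simp [h12, h13]), Finset.sum_pair h23, add_assoc]
    have hsizes3 : C₁.card + C₂.card + C₃.card = 5 := by
      have : ∑ C ∈ ({C₁, C₂, C₃} : Finset (Finset (EuclideanSpace ℝ (Fin 2)))), C.card = 5 :=
        hsizes
      rw [Finset.sum_insert (by simp [h12, h13]), Finset.sum_pair h23] at this
      omega
    rw [hsum3 clusterCost]
    have hg := g_triple C₁.card C₂.card C₃.card (hpos _ hmem1) (hpos _ hmem2) (hpos _ hmem3)
      hsizes3
    have hc1 := cost_ge_g φ C₁ (hsub _ hmem1)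
    have hc2 := cost_ge_g φ C₂ (hsub _ hmem2)
    have hc3 := cost_ge_g φ C₃ (hsub _ hmem3)
    have hpb : pb ({C₁, C₂, C₃} : Finset (Finset (EuclideanSpace ℝ (Fin 2)))).card = 1 := by
      rw [hm3]; simp [pb]
    rw [hpb]
    linarith
  · have hpb : pb P'.card = 0 := by simp [pb, hm1, hm2, hm3]
    rw [hpb]
    exact Finset.sum_nonneg (fun C _ => clusterCost_nonneg C)


lemma pb_combo (m1 m2 : ℕ) (h1 : 1 ≤ m1) (h2 : 1 ≤ m2) (h : m1 + m2 ≤ 5) :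
    (16 + Real.sqrt 5) / 6 ≤ pb m1 + pb m2 := by
  have hb1 : m1 ≤ 4 := by omega
  have hb2 : m2 ≤ 4 := by omega
  interval_cases m1 <;> interval_cases m2 <;>
    first
      | omega
      | (norm_num [pb] <;> nlinarith [hs2])

lemma sqd_adj (m : Fin 5) : sqd m (m + 1) = 1 := by
  unfold sqd
  rw [res_adj m]
  norm_num

lemma fin5_ne_succ : ∀ m : Fin 5, m ≠ m + 1 := by decide
lemma fin5_pred_add : ∀ m : Fin 5, m - 1 + 1 = m := by decide
lemma fin5_pred_ne : ∀ m : Fin 5, m - 1 ≠ m := by decide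

lemma cost_pair (m : Fin 5) :
    clusterCost {φ (pentagonVertex m), φ (pentagonVertex (m + 1))} = 1 / 2 := by
  set a := φ (pentagonVertex m) with ha
  set b := φ (pentagonVertex (m + 1)) with hb
  have hab : a ≠ b := fun h => fin5_ne_succ m (w_inj φ h)
  have hsq : ‖a - b‖ ^ 2 = 1 := by rw [ha, hb, w_norm φ]; exact sqd_adj m
  unfold clusterCost
  rw [Finset.card_pair hab, Finset.sum_pair hab, Finset.sum_pair hab, Finset.sum_pair hab]
  simp only [sub_self, norm_zero]
  rw [norm_sub_rev b a, hsq]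
  norm_num

end PentAux

open Finset in
/-- The integrality-gap instance: for two sufficiently separated unit-side regular
pentagons `V₁, V₂` with `D = V₁ ∪ V₂` and `k = 5`, (a) there is a feasible fractional
cluster solution of value `5/2`, while (b) every partition of `D` into at most 5 nonempty
clusters costs at least `(16+√5)/6`; hence the integral/fractional ratio is at least
`(16+√5)/15 > 1.2157`. -/
theorem integrality_gap_lower_bound :
    ∃ M₀ : ℝ, M₀ > 0 ∧
      ∀ V₁ V₂ : Finset (EuclideanSpace ℝ (Fin 2)),
        IsUnitRegularPentagon V₁ → IsUnitRegularPentagon V₂ →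
        (∀ p ∈ V₁, ∀ q ∈ V₂, ‖p - q‖ ≥ M₀) →
        (∃ x : Finset (EuclideanSpace ℝ (Fin 2)) → ℝ,
          (∀ C, 0 ≤ x C) ∧
          (∀ C, x C ≠ 0 → C ⊆ V₁ ∪ V₂ ∧ C.Nonempty) ∧
          (∀ j ∈ V₁ ∪ V₂,
            1 ≤ ∑ C ∈ (V₁ ∪ V₂).powerset.filter (fun C => j ∈ C), x C) ∧
          (∑ C ∈ (V₁ ∪ V₂).powerset, x C ≤ 5) ∧
          ∑ C ∈ (V₁ ∪ V₂).powerset, x C * clusterCost C = 5 / 2) ∧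
        (∀ P : Finset (Finset (EuclideanSpace ℝ (Fin 2))),
          IsPartitionIntoAtMost (V₁ ∪ V₂) 5 P →
            (16 + Real.sqrt 5) / 6 ≤ ∑ C ∈ P, clusterCost C) ∧
        ((16 + Real.sqrt 5) / 6) / (5 / 2) ≥ (16 + Real.sqrt 5) / 15 ∧
        (16 + Real.sqrt 5) / 15 > 1.2157 := by
  classical
  have hs2 := PentAux.hs2
  have hs3 := PentAux.hs3
  refine ⟨10, by norm_num, ?_⟩
  intro V₁ V₂ h1 h2 hsep
  obtain ⟨φ₁, hV₁⟩ := h1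
  obtain ⟨φ₂, hV₂⟩ := h2
  have hdisjV : ∀ p, p ∈ V₁ → p ∈ V₂ → False := by
    intro p hp hq
    have h := hsep p hp p hq
    rw [sub_self, norm_zero] at h
    linarith
  have hV₁ne : φ₁ (pentagonVertex 0) ∈ V₁ := by
    rw [hV₁]; exact Finset.mem_image_of_mem _ (Finset.mem_univ 0)
  set w : Fin 2 → Fin 5 → EuclideanSpace ℝ (Fin 2) :=
    ![fun m => φ₁ (pentagonVertex m), fun m => φ₂ (pentagonVertex m)] with hw
  have hwV : ∀ i m, w i m ∈ V₁ ∪ V₂ := by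
    intro i m
    fin_cases i
    · exact Finset.mem_union_left _
        (by rw [hV₁]; exact Finset.mem_image_of_mem _ (Finset.mem_univ m))
    · exact Finset.mem_union_right _
        (by rw [hV₂]; exact Finset.mem_image_of_mem _ (Finset.mem_univ m))
  set pr : Fin 2 × Fin 5 → Finset (EuclideanSpace ℝ (Fin 2)) :=
    fun p => {w p.1 p.2, w p.1 (p.2 + 1)} with hpr
  have hprsub : ∀ p : Fin 2 × Fin 5, pr p ⊆ V₁ ∪ V₂ := by
    intro p q hq
    simp only [hpr, Finset.mem_insert, Finset.mem_singleton] at hq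
    rcases hq with rfl | rfl
    · exact hwV _ _
    · exact hwV _ _
  have hprmem : ∀ p : Fin 2 × Fin 5, pr p ∈ (V₁ ∪ V₂).powerset :=
    fun p => Finset.mem_powerset.mpr (hprsub p)
  have hcostpr : ∀ p : Fin 2 × Fin 5, clusterCost (pr p) = 1 / 2 := by
    rintro ⟨i, m⟩
    fin_cases i
    · simpa [hpr, hw] using PentAux.cost_pair φ₁ m
    · simpa [hpr, hw] using PentAux.cost_pair φ₂ m
  have hswap : ∀ f : Finset (EuclideanSpace ℝ (Fin 2)) → ℝ,
      (∑ C ∈ (V₁ ∪ V₂).powerset,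
        (∑ p : Fin 2 × Fin 5, if pr p = C then (1:ℝ)/2 else 0) * f C)
      = ∑ p : Fin 2 × Fin 5, (1/2) * f (pr p) := by
    intro f
    simp_rw [Finset.sum_mul, ite_mul, zero_mul]
    rw [Finset.sum_comm]
    refine Finset.sum_congr rfl fun p _ => ?_
    rw [Finset.sum_ite_eq ((V₁ ∪ V₂).powerset) (pr p) (fun C => 1/2 * f C),
      if_pos (hprmem p)]
  refine ⟨⟨fun C => ∑ p : Fin 2 × Fin 5, if pr p = C then (1:ℝ)/2 else 0,
    ?_, ?_, ?_, ?_, ?_⟩, ?_, ?_, ?_⟩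
  · -- nonneg
    intro C
    apply Finset.sum_nonneg
    intro p _
    split <;> norm_num
  · -- support
    intro C hxC
    have hex : ∃ p : Fin 2 × Fin 5, pr p = C := by
      by_contra hall
      push_neg at hall
      exact hxC (Finset.sum_eq_zero fun p _ => if_neg (hall p))
    obtain ⟨p, rfl⟩ := hex
    exact ⟨hprsub p, Finset.insert_nonempty _ _⟩
  · -- coverage
    intro j hj
    have hrep : ∃ i m, w i m = j := by
      rw [Finset.mem_union] at hj
      rcases hj with hj | hj
      · rw [hV₁] at hj
        obtain ⟨m, -, rfl⟩ := Finset.mem_image.1 hj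
        exact ⟨0, m, by simp [hw]⟩
      · rw [hV₂] at hj
        obtain ⟨m, -, rfl⟩ := Finset.mem_image.1 hj
        exact ⟨1, m, by simp [hw]⟩
    obtain ⟨i, m, hj'⟩ := hrep
    subst hj'
    have hsum : ∑ C ∈ (V₁ ∪ V₂).powerset.filter (fun C => w i m ∈ C),
        (∑ p : Fin 2 × Fin 5, if pr p = C then (1:ℝ)/2 else 0)
        = ∑ p : Fin 2 × Fin 5,
            (if pr p ∈ (V₁ ∪ V₂).powerset.filter (fun C => w i m ∈ C) then (1:ℝ)/2 else 0) := by
      rw [Finset.sum_comm]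
      exact Finset.sum_congr rfl fun p _ =>
        Finset.sum_ite_eq _ (pr p) (fun _ => (1:ℝ)/2)
    rw [hsum]
    have hne2 : ((i, m - 1) : Fin 2 × Fin 5) ≠ (i, m) :=
      fun hcon => PentAux.fin5_pred_ne m (congrArg Prod.snd hcon)
    have hterm : ∀ q ∈ ({(i, m - 1), (i, m)} : Finset (Fin 2 × Fin 5)),
        (if pr q ∈ (V₁ ∪ V₂).powerset.filter (fun C => w i m ∈ C) then (1:ℝ)/2 else 0)
          = 1/2 := by
      intro q hq
      rw [Finset.mem_insert, Finset.mem_singleton] at hq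
      rcases hq with rfl | rfl
      · rw [if_pos]
        rw [Finset.mem_filter]
        refine ⟨hprmem _, ?_⟩
        simp only [hpr]
        rw [PentAux.fin5_pred_add m]
        exact Finset.mem_insert_of_mem (Finset.mem_singleton_self _)
      · rw [if_pos]
        rw [Finset.mem_filter]
        exact ⟨hprmem _, Finset.mem_insert_self _ _⟩
    calc (1:ℝ) = ∑ q ∈ ({(i, m - 1), (i, m)} : Finset (Fin 2 × Fin 5)), (1:ℝ)/2 := by
          rw [Finset.sum_pair hne2]; norm_num
      _ = ∑ q ∈ ({(i, m - 1), (i, m)} : Finset (Fin 2 × Fin 5)),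
            (if pr q ∈ (V₁ ∪ V₂).powerset.filter (fun C => w i m ∈ C) then (1:ℝ)/2 else 0) :=
          (Finset.sum_congr rfl hterm).symm
      _ ≤ ∑ p : Fin 2 × Fin 5,
            (if pr p ∈ (V₁ ∪ V₂).powerset.filter (fun C => w i m ∈ C) then (1:ℝ)/2 else 0) := by
          apply Finset.sum_le_sum_of_subset_of_nonneg (Finset.subset_univ _)
          intro p _ _
          split <;> norm_num
  · -- total weight
    have h := hswap (fun _ => 1)
    simp only [mul_one] at h
    rw [h, Finset.sum_const]
    simp only [Finset.card_univ, Fintype.card_prod, Fintype.card_fin]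
    norm_num
  · -- objective
    have hconst : ∀ p ∈ (Finset.univ : Finset (Fin 2 × Fin 5)),
        (1:ℝ)/2 * clusterCost (pr p) = 1/2 * (1/2) := fun p _ => by rw [hcostpr p]
    rw [hswap clusterCost, Finset.sum_congr rfl hconst, Finset.sum_const]
    simp only [Finset.card_univ, Fintype.card_prod, Fintype.card_fin]
    norm_num
  · -- partition lower bound
    intro P hP
    obtain ⟨hne, hdisj, hsup, hcard⟩ := hP
    have hsubP : ∀ C ∈ P, C ⊆ V₁ ∪ V₂ := fun C hC => by
      rw [← hsup]; exact Finset.le_sup (f := id) hC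
    by_cases hmix : ∃ C ∈ P, (∃ p ∈ C, p ∈ V₁) ∧ (∃ q ∈ C, q ∈ V₂)
    · obtain ⟨C, hC, ⟨p, hpC, hp1⟩, ⟨q, hqC, hq2⟩⟩ := hmix
      have hpq : ‖p - q‖ ≥ 10 := hsep p hp1 q hq2
      have hpqne : p ≠ q := by
        intro h; rw [h, sub_self, norm_zero] at hpq; linarith
      have hcard10 : (C.card : ℝ) ≤ 10 := by
        have ha : C.card ≤ (V₁ ∪ V₂).card := Finset.card_le_card (hsubP C hC)
        have hb : (V₁ ∪ V₂).card ≤ 10 := by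
          calc (V₁ ∪ V₂).card ≤ V₁.card + V₂.card := Finset.card_union_le _ _
            _ ≤ 10 := by
              rw [hV₁, hV₂, Finset.card_image_of_injective _ (PentAux.w_inj φ₁),
                Finset.card_image_of_injective _ (PentAux.w_inj φ₂)]
              simp
        exact_mod_cast le_trans ha hb
      have hCpos : 0 < C.card := Finset.card_pos.mpr ⟨p, hpC⟩
      have hSS : (200:ℝ) ≤ ∑ p' ∈ C, ∑ q' ∈ C, ‖p' - q'‖ ^ 2 := by
        have hA : ‖p - q‖ ^ 2 ≤ ∑ q' ∈ C, ‖p - q'‖ ^ 2 :=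
          Finset.single_le_sum (f := fun q' => ‖p - q'‖ ^ 2) (fun x _ => by positivity) hqC
        have hB : ‖q - p‖ ^ 2 ≤ ∑ q' ∈ C, ‖q - q'‖ ^ 2 :=
          Finset.single_le_sum (f := fun q' => ‖q - q'‖ ^ 2) (fun x _ => by positivity) hpC
        have hsubpq : ({p, q} : Finset (EuclideanSpace ℝ (Fin 2))) ⊆ C := by
          intro x hx
          rw [Finset.mem_insert, Finset.mem_singleton] at hx
          rcases hx with rfl | rfl
          · exact hpC
          · exact hqC
        have hCsum : ∑ p' ∈ ({p, q} : Finset (EuclideanSpace ℝ (Fin 2))),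
            ∑ q' ∈ C, ‖p' - q'‖ ^ 2 ≤ ∑ p' ∈ C, ∑ q' ∈ C, ‖p' - q'‖ ^ 2 :=
          Finset.sum_le_sum_of_subset_of_nonneg hsubpq
            (fun x _ _ => Finset.sum_nonneg fun y _ => by positivity)
        rw [Finset.sum_pair hpqne] at hCsum
        have h4 : (100:ℝ) ≤ ‖p - q‖ ^ 2 := by nlinarith [hpq, norm_nonneg (p - q)]
        have h5 : (100:ℝ) ≤ ‖q - p‖ ^ 2 := by rw [norm_sub_rev]; exact h4
        linarith
      have hcostC : (10:ℝ) ≤ clusterCost C := by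
        unfold clusterCost
        have hn : (0:ℝ) < (C.card:ℝ) := by exact_mod_cast hCpos
        have hfrac : (1:ℝ)/20 ≤ 1/(2 * (C.card:ℝ)) := by
          apply one_div_le_one_div_of_le
          · linarith
          · linarith
        calc (10:ℝ) = (1/20) * 200 := by norm_num
          _ ≤ (1/(2 * (C.card:ℝ))) * (∑ p' ∈ C, ∑ q' ∈ C, ‖p' - q'‖ ^ 2) :=
              mul_le_mul hfrac hSS (by norm_num) (by positivity)
      calc (16 + Real.sqrt 5)/6 ≤ 10 := by nlinarith [hs3]
        _ ≤ clusterCost C := hcostC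
        _ ≤ ∑ C' ∈ P, clusterCost C' :=
            Finset.single_le_sum (fun C' _ => PentAux.clusterCost_nonneg C') hC
    · push_neg at hmix
      have hsplit : ∀ C ∈ P, C ⊆ V₁ ∨ C ⊆ V₂ := by
        intro C hC
        by_cases hc1 : ∃ p ∈ C, p ∈ V₁
        · left
          intro q hq
          have hq2 := hmix C hC hc1 q hq
          have hqu := hsubP C hC hq
          rw [Finset.mem_union] at hqu
          tauto
        · right
          intro q hq
          push_neg at hc1
          have hqu := hsubP C hC hq
          rw [Finset.mem_union] at hqu
          rcases hqu with h | h
          · exact absurd h (hc1 q hq)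
          · exact h
      set P₁ := P.filter (fun C => C ⊆ V₁) with hP₁
      set P₂ := P.filter (fun C => ¬ C ⊆ V₁) with hP₂
      have hsup1 : P₁.sup id = V₁ := by
        apply le_antisymm
        · apply Finset.sup_le
          intro C hC
          rw [hP₁, Finset.mem_filter] at hC
          exact hC.2
        · intro v hv
          have hvu : v ∈ P.sup id := by rw [hsup]; exact Finset.mem_union_left _ hv
          rw [Finset.mem_sup] at hvu
          obtain ⟨C, hC, hvC⟩ := hvu
          rcases hsplit C hC with h | h
          · have hCP1 : C ∈ P₁ := by rw [hP₁, Finset.mem_filter]; exact ⟨hC, h⟩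
            exact Finset.le_sup (f := id) hCP1 hvC
          · exact absurd (h hvC) (fun hc => hdisjV v hv hc)
      have hsup2 : P₂.sup id = V₂ := by
        apply le_antisymm
        · apply Finset.sup_le
          intro C hC
          rw [hP₂, Finset.mem_filter] at hC
          rcases hsplit C hC.1 with h | h
          · exact absurd h hC.2
          · exact h
        · intro v hv
          have hvu : v ∈ P.sup id := by rw [hsup]; exact Finset.mem_union_right _ hv
          rw [Finset.mem_sup] at hvu
          obtain ⟨C, hC, hvC⟩ := hvu
          by_cases hCV1 : C ⊆ V₁
          · exact absurd hv (fun hc => hdisjV v (hCV1 hvC) hc)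
          · have hCP2 : C ∈ P₂ := by rw [hP₂, Finset.mem_filter]; exact ⟨hC, hCV1⟩
            exact Finset.le_sup (f := id) hCP2 hvC
      have hm1 : 1 ≤ P₁.card := by
        rw [Nat.one_le_iff_ne_zero, Ne, Finset.card_eq_zero]
        intro hemp
        rw [hemp, Finset.sup_empty] at hsup1
        rw [← hsup1] at hV₁ne
        simp at hV₁ne
      have hm2 : 1 ≤ P₂.card := by
        rw [Nat.one_le_iff_ne_zero, Ne, Finset.card_eq_zero]
        intro hemp
        have hV₂ne : φ₂ (pentagonVertex 0) ∈ V₂ := by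
          rw [hV₂]; exact Finset.mem_image_of_mem _ (Finset.mem_univ 0)
        rw [hemp, Finset.sup_empty] at hsup2
        rw [← hsup2] at hV₂ne
        simp at hV₂ne
      have hmm : P₁.card + P₂.card ≤ 5 := by
        rw [hP₁, hP₂, Finset.card_filter_add_card_filter_not]
        exact hcard
      have hb1 := PentAux.pent_partition_bound φ₁ P₁
        (fun C hC => hne C (Finset.mem_of_mem_filter C hC))
        (hdisj.subset (Finset.coe_subset.mpr (Finset.filter_subset _ _)))
        (hsup1.trans hV₁)
      have hb2 := PentAux.pent_partition_bound φ₂ P₂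
        (fun C hC => hne C (Finset.mem_of_mem_filter C hC))
        (hdisj.subset (Finset.coe_subset.mpr (Finset.filter_subset _ _)))
        (hsup2.trans hV₂)
      have hcombo := PentAux.pb_combo P₁.card P₂.card hm1 hm2 hmm
      have hsumsplit : ∑ C ∈ P, clusterCost C
          = ∑ C ∈ P₁, clusterCost C + ∑ C ∈ P₂, clusterCost C :=
        (Finset.sum_filter_add_sum_filter_not P (fun C => C ⊆ V₁) clusterCost).symm
      rw [hsumsplit]
      linarith
  · -- ratio
    have h : ((16 + Real.sqrt 5)/6) / (5/2) = (16 + Real.sqrt 5)/15 := by ring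
    rw [ge_iff_le, h]
  · -- numeric
    rw [gt_iff_lt]
    nlinarith [PentAux.h5, hs2]
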